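/- arXiv:2408.03212 — 3 statements merged into one kernel-verified Lean document; each statement's English description precedes it below -/
import Mathlib

section
/- Fix a positive integer $k$. Define $f_k(n,a) = \sum_{-a \le i_1 < i_2 < \cdots < i_k \le n-1-a} i_1 i_2 \cdots i_k$, the sum over strictly increasing $k$-tuples of integers in the interval $[-a, n-1-a]$. Then there exists a polynomial $F_k(x,y) \in \mathbb{Q}[x,y]$ such that $f_k(n,a) = F_k(n,a)$ for all integers $n \ge 1$ and $a \ge 0$. -/
open Finset

private def vv (n a : ℕ) : Fin 2 → ℚ := fun i : Fin 2 => if i = 0 then (n : ℚ) else (a : ℚ)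

private lemma sum_pow_poly (p : ℕ) : ∃ S : Polynomial ℚ, ∀ n : ℕ,
    S.eval (n : ℚ) = ∑ i ∈ range n, (i : ℚ) ^ p := by
  refine ⟨∑ i ∈ range (p + 1),
    Polynomial.C (bernoulli i * ((p + 1).choose i) / (p + 1)) * Polynomial.X ^ (p + 1 - i), ?_⟩
  intro n
  rw [sum_range_pow n p]
  simp only [Polynomial.eval_finset_sum, Polynomial.eval_mul, Polynomial.eval_C,
    Polynomial.eval_pow, Polynomial.eval_X]
  refine Finset.sum_congr rfl fun i _ => by ring

private lemma eval_poly_eval₂ (S : Polynomial ℚ) (w : Fin 2 → ℚ) :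
    MvPolynomial.eval w (Polynomial.eval₂ MvPolynomial.C (MvPolynomial.X 0) S)
      = Polynomial.eval (w 0) S := by
  rw [Polynomial.hom_eval₂]
  have : (MvPolynomial.eval w).comp (MvPolynomial.C : ℚ →+* MvPolynomial (Fin 2) ℚ)
      = RingHom.id ℚ := by
    ext q; simp
  rw [this, MvPolynomial.eval_X]
  rfl

private lemma sum_mv (F : MvPolynomial (Fin 2) ℚ) : ∃ G : MvPolynomial (Fin 2) ℚ,
    ∀ n a : ℕ, MvPolynomial.eval (vv n a) G = ∑ m ∈ range n, MvPolynomial.eval (vv m a) F := by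
  induction F using MvPolynomial.induction_on' with
  | monomial d c =>
    obtain ⟨S, hS⟩ := sum_pow_poly (d 0)
    refine ⟨(Polynomial.eval₂ MvPolynomial.C (MvPolynomial.X 0) S) *
      (MvPolynomial.C c * MvPolynomial.X 1 ^ (d 1)), fun n a => ?_⟩
    have hmon : ∀ m : ℕ, MvPolynomial.eval (vv m a) (MvPolynomial.monomial d c)
        = (m : ℚ) ^ (d 0) * (c * (a : ℚ) ^ (d 1)) := by
      intro m
      rw [MvPolynomial.eval_monomial]
      have : ∀ x : Fin 2, x ∈ d.support → vv m a x ^ d x =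
          (if x = 0 then (m : ℚ) ^ d 0 else (a : ℚ) ^ d 1) := by
        intro x _
        fin_cases x <;> simp [vv]
      rw [Finsupp.prod, Finset.prod_congr rfl this]
      rcases Finset.subset_iff.2 (fun x (_ : x ∈ d.support) => Finset.mem_univ x) with _
      -- compute product over support explicitly
      by_cases h0 : (0 : Fin 2) ∈ d.support <;> by_cases h1 : (1 : Fin 2) ∈ d.support
      · have : d.support = {0, 1} := by
          ext x; fin_cases x <;> simp [h0, h1]
        rw [this]; simp; ring
      · have : d.support = {0} := by
          ext x; fin_cases x <;> simp [h0, h1]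
        rw [this]
        have : d 1 = 0 := by simpa using h1
        simp [this]; ring
      · have : d.support = {1} := by
          ext x; fin_cases x <;> simp [h0, h1]
        rw [this]
        have : d 0 = 0 := by simpa using h0
        simp [this]; try ring
      · have : d.support = ∅ := by
          ext x; fin_cases x <;> simp [h0, h1]
        rw [this]
        have e0 : d 0 = 0 := by simpa using h0
        have e1 : d 1 = 0 := by simpa using h1
        simp [e0, e1]
    simp only [hmon, map_mul, eval_poly_eval₂, MvPolynomial.eval_C, MvPolynomial.eval_X,
      map_pow]
    have hv0 : vv n a 0 = (n : ℚ) := by simp [vv]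
    have hv1 : vv n a 1 = (a : ℚ) := by simp [vv]
    rw [hv0, hv1, hS, Finset.sum_mul]
  | add p q hp hq =>
    obtain ⟨G1, h1⟩ := hp
    obtain ⟨G2, h2⟩ := hq
    exact ⟨G1 + G2, fun n a => by simp [h1, h2, Finset.sum_add_distrib]⟩

private lemma ek_poly (k : ℕ) : ∃ F : MvPolynomial (Fin 2) ℚ, ∀ n a : ℕ,
    MvPolynomial.eval (vv n a) F
      = ∑ S ∈ powersetCard k (Icc (-(a : ℤ)) ((n : ℤ) - 1 - a)), ∏ i ∈ S, (i : ℚ) := by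
  induction k with
  | zero =>
    exact ⟨1, fun n a => by simp⟩
  | succ k ih =>
    obtain ⟨Fk, hFk⟩ := ih
    obtain ⟨G, hG⟩ := sum_mv ((MvPolynomial.X 0 - MvPolynomial.X 1) * Fk)
    refine ⟨G, fun n a => ?_⟩
    rw [hG]
    induction n with
    | zero =>
      have h0 : Icc (-(a : ℤ)) (((0:ℕ) : ℤ) - 1 - a) = ∅ := by
        apply Finset.Icc_eq_empty; push_cast; omega
      rw [h0]
      have : Finset.powersetCard (k+1) (∅ : Finset ℤ) = ∅ := by
        rw [Finset.powersetCard_eq_empty]; simp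
      simp [this]
    | succ n ihn =>
      have hins : Icc (-(a : ℤ)) (((n : ℤ) + 1) - 1 - a)
          = insert ((n : ℤ) - a) (Icc (-(a : ℤ)) ((n : ℤ) - 1 - a)) := by
        ext x; simp only [Finset.mem_Icc, Finset.mem_insert]; omega
      have hnot : ((n : ℤ) - a) ∉ Icc (-(a : ℤ)) ((n : ℤ) - 1 - a) := by
        simp only [Finset.mem_Icc]; omega
      have hcast : ((n + 1 : ℕ) : ℤ) - 1 - a = ((n : ℤ) + 1) - 1 - a := by push_cast; ring
      rw [Finset.sum_range_succ, ihn, hcast, hins,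
        Finset.powersetCard_succ_insert hnot,
        Finset.sum_union]
      · rw [Finset.sum_image]
        · have : ∀ S ∈ powersetCard k (Icc (-(a : ℤ)) ((n : ℤ) - 1 - a)),
              (∏ i ∈ insert ((n : ℤ) - a) S, (i : ℚ)) = ((n : ℚ) - a) * ∏ i ∈ S, (i : ℚ) := by
            intro S hS
            have : ((n : ℤ) - a) ∉ S := fun h => hnot ((Finset.mem_powersetCard.1 hS).1 h)
            rw [Finset.prod_insert this]; push_cast; ring
          rw [Finset.sum_congr rfl this, ← Finset.mul_sum, ← hFk n a]
          simp [vv]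
          try ring
        · intro S hS T hT hST
          have hSmem : ((n : ℤ) - a) ∉ S := fun h => hnot ((Finset.mem_powersetCard.1 hS).1 h)
          have hTmem : ((n : ℤ) - a) ∉ T := fun h => hnot ((Finset.mem_powersetCard.1 hT).1 h)
          have := congrArg (fun u : Finset ℤ => u.erase ((n : ℤ) - a)) hST
          simpa [Finset.erase_insert hSmem, Finset.erase_insert hTmem] using this
      · refine Finset.disjoint_left.2 fun S hS1 hS2 => ?_
        obtain ⟨T, hT, rfl⟩ := Finset.mem_image.1 hS2
        have : ((n : ℤ) - a) ∉ T := fun h => hnot ((Finset.mem_powersetCard.1 hT).1 h)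
        exact hnot ((Finset.mem_powersetCard.1 hS1).1 (Finset.mem_insert_self _ _))

theorem stmt9 (k : ℕ) (hk : 1 ≤ k) :
    ∃ F : MvPolynomial (Fin 2) ℚ,
      ∀ (n a : ℕ), 1 ≤ n →
        MvPolynomial.eval (fun i : Fin 2 => if i = 0 then (n : ℚ) else (a : ℚ)) F
          = ∑ S ∈ Finset.powersetCard k (Finset.Icc (-(a : ℤ)) ((n : ℤ) - 1 - a)),
              ∏ i ∈ S, (i : ℚ) := by
  obtain ⟨F, hF⟩ := ek_poly k
  exact ⟨F, fun n a _ => hF n a⟩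
end

section
/- Let $n \ge 1$ and $k > 1$ be integers. Then $\sum_{a=0}^{n-1} \sum_{j=0}^{k-1} \sum_{\substack{-a \le i_1 < \cdots < i_j \le -1 \\ 1 \le i'_1 < \cdots < i'_{k-1-j} \le n-1-a}} \frac{1}{i_1 \cdots i_j \cdot i'_1 \cdots i'_{k-1-j}} = 0$. -/
/-!
The inner double sum is the coefficient of `X ^ (k - 1)` in
`∏ (1 + X / i)` over `-a ≤ i ≤ n - 1 - a`, `i ≠ 0`, so it suffices that these polynomials sum to
the constant `n`. Evaluated at `x`, the negative and positive halves of the product are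
`multichoose (1 - x) a` and `multichoose (1 + x) (n - 1 - a)`, and the Vandermonde identity for
`multichoose` turns the sum over `a` into `multichoose 2 (n - 1) = n`.
-/

open Finset Polynomial

namespace Ring

theorem multichoose_eq_negOnePow_smul_choose {R : Type*} [NonAssocRing R] [Pow R ℕ]
    [NatPowAssoc R] [BinomialRing R] (r : R) (n : ℕ) :
    multichoose r n = Int.negOnePow n • choose (-r) n := by
  rw [choose_neg', smul_smul, ← Int.negOnePow_add, Int.negOnePow_even _ (by simp), one_smul]

theorem multichoose_add_eq {R : Type*} [Ring R] [BinomialRing R] {r s : R} (k : ℕ)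
    (h : Commute r s) :
    multichoose (r + s) k =
      ∑ ij ∈ antidiagonal k, multichoose r ij.1 * multichoose s ij.2 := by
  rw [multichoose_eq_negOnePow_smul_choose, neg_add, add_choose_eq k h.neg_left.neg_right,
    smul_sum]
  refine sum_congr rfl fun ij hij => ?_
  rw [multichoose_eq_negOnePow_smul_choose, multichoose_eq_negOnePow_smul_choose,
    smul_mul_smul_comm, ← Int.negOnePow_add, ← Nat.cast_add, mem_antidiagonal.mp hij]

theorem succ_mul_multichoose_succ {K : Type*} [Field K] [CharZero K] (r : K) (m : ℕ) :
    (m + 1 : K) * multichoose r (m + 1) = multichoose r m * (r + m) := by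
  have h := factorial_nsmul_multichoose_eq_ascPochhammer r (m + 1)
  rw [ascPochhammer_smeval_eq_eval, ascPochhammer_succ_eval, ← ascPochhammer_smeval_eq_eval,
    ← factorial_nsmul_multichoose_eq_ascPochhammer, Nat.factorial_succ, mul_nsmul',
    nsmul_eq_mul, nsmul_eq_mul, nsmul_eq_mul, mul_left_comm, mul_assoc] at h
  push_cast at h
  exact mul_left_cancel₀ (Nat.cast_ne_zero.mpr m.factorial_ne_zero) h

theorem multichoose_add_one_eq_prod {K : Type*} [Field K] [CharZero K] (y : K) (m : ℕ) :
    multichoose (y + 1) m = ∏ i ∈ Icc 1 m, (1 + y / i) := by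
  induction m with
  | zero => simp
  | succ m ih =>
    have hm : (m + 1 : K) ≠ 0 := by exact_mod_cast m.succ_ne_zero
    rw [prod_Icc_succ_top (by omega), ← ih]
    field_simp
    push_cast
    linear_combination succ_mul_multichoose_succ (y + 1) m

end Ring

namespace Polynomial

variable {R ι : Type*} [CommSemiring R]

theorem coeff_prod_one_add_C_mul_X (s : Finset ι) (w : ι → R) (m : ℕ) :
    (∏ i ∈ s, (1 + C (w i) * X)).coeff m = ∑ t ∈ s.powersetCard m, ∏ i ∈ t, w i := by
  classical
  simp only [prod_one_add, prod_mul_distrib, prod_const, ← map_prod, finsetSum_coeff,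
    coeff_C_mul_X_pow, ← sum_filter, powersetCard_eq_filter]
  exact sum_congr (by ext; simp [eq_comm]) fun _ _ => rfl

theorem coeff_prod_one_add_C_mul_X_mul_prod (s t : Finset ι) (w : ι → R) (m : ℕ) :
    ((∏ i ∈ s, (1 + C (w i) * X)) * ∏ i ∈ t, (1 + C (w i) * X)).coeff m =
      ∑ j ∈ range (m + 1), ∑ S ∈ s.powersetCard j, ∑ S' ∈ t.powersetCard (m - j),
        (∏ i ∈ S, w i) * ∏ i ∈ S', w i := by
  simp only [coeff_mul, Nat.sum_antidiagonal_eq_sum_range_succ_mk, coeff_prod_one_add_C_mul_X,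
    sum_mul_sum]

end Polynomial

namespace Finset

variable {M : Type*} [CommMonoid M]

theorem prod_Icc_one_intCast (f : ℤ → M) (b : ℕ) :
    ∏ i ∈ Icc (1 : ℤ) b, f i = ∏ i ∈ Icc 1 b, f i := by
  refine prod_nbij' Int.toNat (↑) ?_ ?_ ?_ ?_ ?_ <;> intro i hi <;> simp_all <;>
    first | omega | congr 1; omega

theorem prod_Icc_neg_intCast (f : ℤ → M) (b : ℕ) :
    ∏ i ∈ Icc (-(b : ℤ)) (-1), f i = ∏ i ∈ Icc 1 b, f (-i) := by
  refine prod_nbij' (fun i => (-i).toNat) (fun i => -i) ?_ ?_ ?_ ?_ ?_ <;> intro i hi <;>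
    simp_all <;> first | omega | congr 1; omega

end Finset

theorem sum_range_prod_Icc_one_add_div {K : Type*} [Field K] [CharZero K] (x : K) (n : ℕ) :
    ∑ a ∈ range n, (∏ i ∈ Icc (-(a : ℤ)) (-1), (1 + x / i)) *
      ∏ i ∈ Icc (1 : ℤ) (n - 1 - a), (1 + x / i) = n := by
  cases n with
  | zero => simp
  | succ N =>
    have hterm : ∀ a ∈ range (N + 1), (∏ i ∈ Icc (-(a : ℤ)) (-1), (1 + x / i)) *
        ∏ i ∈ Icc (1 : ℤ) ((N + 1 : ℕ) - 1 - a), (1 + x / i) =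
          Ring.multichoose (1 - x) a * Ring.multichoose (1 + x) (N - a) := by
      intro a ha
      have hcast : ((N + 1 : ℕ) : ℤ) - 1 - a = ((N - a : ℕ) : ℤ) := by
        have := mem_range.mp ha; omega
      rw [hcast, prod_Icc_neg_intCast, prod_Icc_one_intCast, sub_eq_neg_add, add_comm 1 x,
        Ring.multichoose_add_one_eq_prod, Ring.multichoose_add_one_eq_prod]
      push_cast
      simp only [div_neg, neg_div]
    rw [sum_congr rfl hterm, ← Nat.sum_antidiagonal_eq_sum_range_succ
      (fun i j => Ring.multichoose (1 - x) i * Ring.multichoose (1 + x) j),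
      ← Ring.multichoose_add_eq N (Commute.all _ _), show 1 - x + (1 + x) = 2 by ring,
      Ring.multichoose_two]
    push_cast
    ring

theorem sum_range_prod_Icc_one_add_C_div_mul_X {K : Type*} [Field K] [CharZero K] (n : ℕ) :
    ∑ a ∈ range n, (∏ i ∈ Icc (-(a : ℤ)) (-1), (1 + C (1 / (i : K)) * X)) *
      ∏ i ∈ Icc (1 : ℤ) (n - 1 - a), (1 + C (1 / (i : K)) * X) = C (n : K) := by
  refine Polynomial.funext fun x => ?_
  simp only [eval_finsetSum, eval_mul, eval_prod, eval_add, eval_one, eval_C, eval_X,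
    one_div_mul_eq_div, sum_range_prod_Icc_one_add_div]

theorem stmt12_general (n k : ℕ) (hk : 1 < k) :
    ∑ a ∈ Finset.range n, ∑ j ∈ Finset.range k,
      ∑ S ∈ Finset.powersetCard j (Finset.Icc (-(a : ℤ)) (-1)),
        ∑ S' ∈ Finset.powersetCard (k - 1 - j) (Finset.Icc (1 : ℤ) ((n : ℤ) - 1 - a)),
          (∏ i ∈ S, (1 / (i : ℚ))) * (∏ i ∈ S', (1 / (i : ℚ)))
      = 0 := by
  obtain ⟨m, rfl⟩ : ∃ m, k = m + 1 := ⟨k - 1, by omega⟩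
  simp only [Nat.add_sub_cancel, ← coeff_prod_one_add_C_mul_X_mul_prod, ← finsetSum_coeff,
    sum_range_prod_Icc_one_add_C_div_mul_X]
  rw [coeff_C, if_neg (by omega)]

theorem stmt12 (n k : ℕ) (hn : 1 ≤ n) (hk : 1 < k) :
    ∑ a ∈ Finset.range n, ∑ j ∈ Finset.range k,
      ∑ S ∈ Finset.powersetCard j (Finset.Icc (-(a : ℤ)) (-1)),
        ∑ S' ∈ Finset.powersetCard (k - 1 - j) (Finset.Icc (1 : ℤ) ((n : ℤ) - 1 - a)),
          (∏ i ∈ S, (1 / (i : ℚ))) * (∏ i ∈ S', (1 / (i : ℚ)))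
      = 0 :=
  stmt12_general n k hk
end

section
/- For a positive integer $r$, let $e_j(\mathbf{v})$ denote the elementary symmetric polynomials in variables $v_1,\ldots,v_r$ (with $e_0 = 1$), and define rational functions $a_k(\mathbf{v})$ for $1 \le k \le r+1$ by the condition that $\sum_{k=1}^{r+1} k\, a_k(\mathbf{v}) \prod_{j=0}^{k-2}(x-j) = \prod_{i=1}^{r}(x + v_i)$ as polynomials in $x$. Then $a_k(\mathbf{v}) = \frac{(-1)^{k-1}}{k!} e_r(\mathbf{v}) + \frac{1}{k} \sum_{j=0}^{r} \Big( \sum_{i=1}^{k-1} \frac{(-1)^{i+k-1} i^{r-j}}{i! \,(k-1-i)!} \Big) e_j(\mathbf{v})$. -/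
open Finset

/-- Elementary symmetric polynomial of degree `j` in the values `v 0, …, v (r-1)`. -/
def esymQ (r : ℕ) (v : Fin r → ℚ) (j : ℕ) : ℚ :=
  ∑ S ∈ Finset.powersetCard j (Finset.univ : Finset (Fin r)), ∏ i ∈ S, v i

lemma lemA (r : ℕ) (v : Fin r → ℚ) (x : ℚ) :
    ∏ i : Fin r, (x + v i) = ∑ j ∈ range (r+1), esymQ r v j * x ^ (r - j) := by
  have h1 : ∏ i : Fin r, (x + v i) = ∏ i : Fin r, (v i + x) := by
    simp [add_comm]
  rw [h1, Finset.prod_add v (fun _ => x) univ]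
  rw [Finset.powerset_card_disjiUnion]
  erw [Finset.sum_disjiUnion]
  rw [Finset.card_univ, Fintype.card_fin]
  apply Finset.sum_congr rfl
  intro j hj
  rw [esymQ, Finset.sum_mul]
  apply Finset.sum_congr rfl
  intro t ht
  rw [Finset.mem_powersetCard] at ht
  rw [Finset.prod_const]
  congr 1
  rw [card_sdiff_of_subset (subset_univ t), card_univ, Fintype.card_fin, ht.2]

lemma lemB (i l : ℕ) :
    ∏ j ∈ range l, ((i:ℚ) - j) = (i.descFactorial l : ℚ) := by
  induction l with
  | zero => simp
  | succ l ih =>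
    rw [prod_range_succ, ih, Nat.descFactorial_succ, Nat.cast_mul]
    rcases le_or_gt (l+1) i with h | h
    · rw [Nat.cast_sub (by omega)]; ring
    · have h0 : i - l = 0 := by omega
      rcases Nat.lt_succ_iff_lt_or_eq.mp h with h' | h'
      · rw [Nat.descFactorial_eq_zero_iff_lt.mpr h']
        simp [h0]
      · subst h'; simp [h0]

lemma lemC (m n : ℕ) :
    ∑ i ∈ range (m+1), (-1:ℚ)^(m-i) * (m.choose i) * (i.descFactorial n) =
    if n = m then (m.factorial : ℚ) else 0 := by
  rcases lt_or_ge m n with h | h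
  · rw [if_neg (by omega)]
    apply Finset.sum_eq_zero
    intro i hi
    rw [mem_range] at hi
    rw [Nat.descFactorial_eq_zero_iff_lt.mpr (by omega)]
    simp
  · -- n ≤ m
    have hsplit : ∑ i ∈ range (m+1), (-1:ℚ)^(m-i) * (m.choose i) * (i.descFactorial n)
        = ∑ i ∈ Finset.Ico n (m+1), (-1:ℚ)^(m-i) * (m.choose i) * (i.descFactorial n) := by
      rw [range_eq_Ico, ← Finset.sum_Ico_consecutive _ (Nat.zero_le n) (by omega)]
      have : ∑ i ∈ Finset.Ico 0 n, (-1:ℚ)^(m-i) * (m.choose i) * (i.descFactorial n) = 0 := by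
        apply Finset.sum_eq_zero
        intro i hi
        rw [Finset.mem_Ico] at hi
        rw [Nat.descFactorial_eq_zero_iff_lt.mpr (by omega)]
        simp
      rw [this, zero_add]
    rw [hsplit, Finset.sum_Ico_eq_sum_range]
    have hmn : m + 1 - n = (m - n) + 1 := by omega
    rw [hmn]
    have key : ∀ s ∈ range (m - n + 1),
        (-1:ℚ)^(m-(n+s)) * (m.choose (n+s)) * ((n+s).descFactorial n)
        = ((m.choose n : ℚ) * n.factorial) * ((-1:ℚ)^(m-n) * ((-1:ℚ)^s * ((m-n).choose s))) := by
      intro s hs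
      rw [mem_range] at hs
      have hs' : s ≤ m - n := by omega
      have h1 : (n+s).descFactorial n = n.factorial * (n+s).choose n := by
        rw [Nat.descFactorial_eq_factorial_mul_choose]
      have h2 : m.choose (n+s) * (n+s).choose n = m.choose n * (m-n).choose s := by
        have := Nat.choose_mul (n := m) (show n ≤ n + s by omega)
        simpa using this
      have hsign : (-1:ℚ)^(m-(n+s)) = (-1:ℚ)^(m-n) * (-1:ℚ)^s := by
        have e : m - n + s = (m - (n+s)) + 2*s := by omega
        have : (-1:ℚ)^(m-n) * (-1:ℚ)^s = (-1:ℚ)^(m-(n+s)) * ((-1:ℚ)^(2*s)) := by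
          rw [← pow_add, e, pow_add]
        rw [this, pow_mul, neg_one_sq, one_pow, mul_one]
      have h2' : ((m.choose (n+s) : ℚ)) * ((n+s).choose n) = ((m.choose n : ℚ)) * ((m-n).choose s) := by
        exact_mod_cast congrArg (Nat.cast : ℕ → ℚ) h2
      rw [hsign, h1]
      push_cast
      linear_combination ((-1:ℚ)^(m-n) * (-1:ℚ)^s * (n.factorial : ℚ)) * h2'
    rw [Finset.sum_congr rfl key, ← Finset.mul_sum, ← Finset.mul_sum]
    have hQ : ∑ s ∈ range (m-n+1), (-1:ℚ)^s * ((m-n).choose s) = if m - n = 0 then 1 else 0 := by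
      have h0 := Int.alternating_sum_range_choose (n := m - n)
      have h1 := congrArg (fun z : ℤ => (z : ℚ)) h0
      push_cast at h1
      simpa using h1
    rw [hQ]
    rcases eq_or_lt_of_le h with he | hlt
    · subst he
      simp [Nat.choose_self]
    · rw [if_neg (by omega), if_neg (by omega)]
      simp

lemma keyL (r : ℕ) (a : ℕ → ℚ) (m : ℕ) (hk2 : m + 1 ≤ r + 1) :
    ∑ i ∈ range (m+1), (-1:ℚ)^(m-i) * (m.choose i) *
      (∑ l ∈ Finset.Icc 1 (r+1), (l:ℚ) * a l * (i.descFactorial (l-1) : ℚ))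
    = ((m+1).factorial : ℚ) * a (m+1) := by
  have h1 : ∀ i ∈ range (m+1), (-1:ℚ)^(m-i) * (m.choose i) *
      (∑ l ∈ Finset.Icc 1 (r+1), (l:ℚ) * a l * (i.descFactorial (l-1) : ℚ))
      = ∑ l ∈ Finset.Icc 1 (r+1),
          (l:ℚ) * a l * ((-1:ℚ)^(m-i) * (m.choose i) * (i.descFactorial (l-1) : ℚ)) := by
    intro i _
    rw [Finset.mul_sum]
    exact Finset.sum_congr rfl fun l _ => by ring
  rw [Finset.sum_congr rfl h1, Finset.sum_comm]
  have h2 : ∀ l ∈ Finset.Icc 1 (r+1),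
      ∑ i ∈ range (m+1), (l:ℚ) * a l * ((-1:ℚ)^(m-i) * (m.choose i) * (i.descFactorial (l-1):ℚ))
      = (l:ℚ) * a l * (if l - 1 = m then (m.factorial:ℚ) else 0) := by
    intro l _
    rw [← Finset.mul_sum, lemC m (l-1)]
  rw [Finset.sum_congr rfl h2]
  rw [Finset.sum_eq_single (m+1)]
  · rw [if_pos (by omega), Nat.factorial_succ]
    push_cast
    ring
  · intro l hl hne
    rw [Finset.mem_Icc] at hl
    rw [if_neg (by omega), mul_zero]
  · intro h
    exact absurd (Finset.mem_Icc.mpr ⟨by omega, hk2⟩) h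

lemma term_eq (m i : ℕ) (him : i ≤ m) (x : ℚ) :
    (((m+1).factorial : ℚ)) * (1/(((m+1:ℕ)):ℚ)) *
      ((-1:ℚ)^(i+m) * x / ((i.factorial : ℚ) * ((m-i).factorial : ℚ)))
    = (-1:ℚ)^(m-i) * (m.choose i : ℚ) * x := by
  have hc : ((m.choose i : ℚ)) * (i.factorial : ℚ) * ((m-i).factorial : ℚ) = (m.factorial : ℚ) := by
    exact_mod_cast congrArg (Nat.cast : ℕ → ℚ) (Nat.choose_mul_factorial_mul_factorial him)
  have hs : (-1:ℚ)^(i+m) = (-1:ℚ)^(m-i) := by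
    have e : i + m = (m - i) + 2*i := by omega
    rw [e, pow_add, pow_mul, neg_one_sq, one_pow, mul_one]
  have hfs : ((m+1).factorial : ℚ) = (((m+1:ℕ)):ℚ) * (m.factorial : ℚ) := by
    rw [Nat.factorial_succ]; push_cast; ring
  have h1 : ((i.factorial : ℚ)) ≠ 0 := Nat.cast_ne_zero.mpr (Nat.factorial_ne_zero i)
  have h2 : (((m-i).factorial : ℚ)) ≠ 0 := Nat.cast_ne_zero.mpr (Nat.factorial_ne_zero (m-i))
  have h3 : (((m+1:ℕ)):ℚ) ≠ 0 := by positivity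
  rw [hs, hfs]
  field_simp
  linear_combination (-x) * hc

theorem stmt14 (r : ℕ) (hr : 1 ≤ r) (v : Fin r → ℚ) (a : ℕ → ℚ)
    (ha : ∀ x : ℚ,
      ∑ k ∈ Finset.Icc 1 (r + 1),
        (k : ℚ) * a k * ∏ j ∈ Finset.range (k - 1), (x - j)
      = ∏ i : Fin r, (x + v i)) :
    ∀ k, 1 ≤ k → k ≤ r + 1 →
      a k = ((-1 : ℚ) ^ (k - 1) / (Nat.factorial k)) * esymQ r v r
        + (1 / (k : ℚ)) *
          ∑ j ∈ Finset.range (r + 1),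
            (∑ i ∈ Finset.Icc 1 (k - 1),
              ((-1 : ℚ) ^ (i + k - 1) * (i : ℚ) ^ (r - j)
                / ((Nat.factorial i) * (Nat.factorial (k - 1 - i)))))
            * esymQ r v j := by
  intro k hk1 hk2
  obtain ⟨m, rfl⟩ : ∃ m, k = m + 1 := ⟨k - 1, by omega⟩
  simp only [Nat.add_sub_cancel, show ∀ i : ℕ, i + (m+1) - 1 = i + m from fun i => by omega]
  have hfact : (((m+1).factorial : ℚ)) ≠ 0 := Nat.cast_ne_zero.mpr (Nat.factorial_ne_zero _)
  have hF : ∀ i : ℕ, ∑ l ∈ Finset.Icc 1 (r+1), (l:ℚ) * a l * (i.descFactorial (l-1):ℚ)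
      = ∑ j ∈ range (r+1), esymQ r v j * (i:ℚ)^(r-j) := by
    intro i
    have h := ha (i:ℚ)
    rw [lemA] at h
    rw [← h]
    exact Finset.sum_congr rfl fun l _ => by rw [lemB]
  have hkey2 : ∑ i ∈ range (m+1), (-1:ℚ)^(m-i) * (m.choose i : ℚ) *
      (∑ j ∈ range (r+1), esymQ r v j * (i:ℚ)^(r-j)) = ((m+1).factorial : ℚ) * a (m+1) := by
    rw [← keyL r a m (by omega)]
    exact Finset.sum_congr rfl fun i _ => by rw [hF]
  rw [Finset.sum_range_succ'] at hkey2
  have h0 : ∑ j ∈ range (r+1), esymQ r v j * (((0:ℕ)):ℚ)^(r-j) = esymQ r v r := by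
    rw [Finset.sum_eq_single r]
    · simp
    · intro j hj hne
      rw [Finset.mem_range] at hj
      rw [Nat.cast_zero, zero_pow (by omega), mul_zero]
    · intro h; exact absurd (Finset.mem_range.mpr (by omega)) h
  rw [h0] at hkey2
  simp only [Nat.sub_zero, Nat.choose_zero_right, Nat.cast_one, mul_one] at hkey2
  have hIcc : ∑ i ∈ range m, (-1:ℚ)^(m-(i+1)) * (m.choose (i+1) : ℚ) *
      (∑ j ∈ range (r+1), esymQ r v j * ((i+1:ℕ):ℚ)^(r-j))
      = ∑ i ∈ Finset.Icc 1 m, (-1:ℚ)^(m-i) * (m.choose i : ℚ) *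
      (∑ j ∈ range (r+1), esymQ r v j * (i:ℚ)^(r-j)) := by
    rw [← Finset.Ico_add_one_right_eq_Icc, Finset.sum_Ico_eq_sum_range]
    exact Finset.sum_congr rfl fun i _ => by rw [add_comm 1 i]
  rw [hIcc] at hkey2
  have expand : ((m+1).factorial : ℚ) * ((1/(((m+1:ℕ)):ℚ)) * ∑ j ∈ range (r+1),
      (∑ i ∈ Finset.Icc 1 m, ((-1:ℚ)^(i+m) * (i:ℚ)^(r-j)
        / ((i.factorial : ℚ) * ((m-i).factorial : ℚ)))) * esymQ r v j)
      = ∑ i ∈ Finset.Icc 1 m, (-1:ℚ)^(m-i) * (m.choose i : ℚ) *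
        (∑ j ∈ range (r+1), esymQ r v j * (i:ℚ)^(r-j)) := by
    rw [← mul_assoc, Finset.mul_sum]
    have step1 : ∀ j ∈ range (r+1), ((m+1).factorial:ℚ) * (1/(((m+1:ℕ)):ℚ)) *
        ((∑ i ∈ Finset.Icc 1 m, ((-1:ℚ)^(i+m) * (i:ℚ)^(r-j)
          / ((i.factorial:ℚ)*((m-i).factorial:ℚ)))) * esymQ r v j)
        = ∑ i ∈ Finset.Icc 1 m,
            ((-1:ℚ)^(m-i) * (m.choose i:ℚ) * (i:ℚ)^(r-j)) * esymQ r v j := by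
      intro j _
      rw [← mul_assoc, Finset.mul_sum, Finset.sum_mul]
      exact Finset.sum_congr rfl fun i hi => by
        rw [term_eq m i (Finset.mem_Icc.mp hi).2]
    rw [Finset.sum_congr rfl step1, Finset.sum_comm]
    refine Finset.sum_congr rfl fun i _ => ?_
    rw [Finset.mul_sum]
    exact Finset.sum_congr rfl fun j _ => by ring
  refine mul_left_cancel₀ hfact ?_
  rw [mul_add, expand, ← hkey2, add_comm]
  congr 1
  field_simp
end
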